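/- The principal symbol sequence of the monopole deformation complex is exact: for any nonzero covector $\xi$ on a 3-dimensional vector space $V$ with inner product, the sequence $\Lambda^0 V^* \to \Lambda^1 V^* \oplus \Lambda^3 V^* \to \Lambda^2 V^*$, given first by $c \mapsto (\xi \wedge c, 0)$ (i.e., $c\mapsto (c\,\xi,0)$) and then by $(a,\phi) \mapsto \xi \wedge a - \iota_{\xi^\sharp}\phi$, is exact at the middle term, the first map is injective, and the second map is surjective. -/

import Mathlib

/-! Under the Hodge identifications `Λ²V* ≅ ℝ³` and `Λ³V* ≅ ℝ`, `ξ ∧ a` becomes the cross product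
`ξ ⨯₃ a` and `ι_{ξ♯}(φ vol)` becomes `φ • ξ`. Dotting `ξ ⨯₃ a = φ • ξ` with `ξ` kills the left side,
so `φ = 0` and then `a` is parallel to `ξ`; surjectivity comes from the expansion
`ξ ⨯₃ (b ⨯₃ ξ) = (ξ ⬝ᵥ ξ) • b - (ξ ⬝ᵥ b) • ξ`. -/

open Matrix

section Field

variable {K : Type*} [Field K] {ξ : Fin 3 → K}

lemma cross_eq_zero_iff_exists_smul_eq (hξ : ξ ≠ 0) {a : Fin 3 → K} :
    ξ ⨯₃ a = 0 ↔ ∃ c : K, c • ξ = a := by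
  rw [← not_iff_not, ← ne_eq, crossProduct_ne_zero_iff_linearIndependent,
    LinearIndependent.pair_iff' hξ, not_exists]

end Field

section OrderedField

variable {K : Type*} [Field K] [LinearOrder K] [IsStrictOrderedRing K] {ξ : Fin 3 → K}

lemma cross_eq_smul_self_iff (hξ : ξ ≠ 0) {a : Fin 3 → K} {φ : K} :
    ξ ⨯₃ a = φ • ξ ↔ φ = 0 ∧ ∃ c : K, c • ξ = a := by
  have hξξ : ξ ⬝ᵥ ξ ≠ 0 := mt dotProduct_self_eq_zero.mp hξ
  refine ⟨fun h => ?_, fun ⟨hφ, hc⟩ => ?_⟩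
  · have hφ : φ = 0 := by
      have hdot := dot_self_cross ξ a
      rw [h, dotProduct_smul, smul_eq_mul, mul_eq_zero] at hdot
      exact hdot.resolve_right hξξ
    rw [hφ, zero_smul, cross_eq_zero_iff_exists_smul_eq hξ] at h
    exact ⟨hφ, h⟩
  · rwa [hφ, zero_smul, cross_eq_zero_iff_exists_smul_eq hξ]

lemma exists_cross_add_smul_eq (hξ : ξ ≠ 0) (b : Fin 3 → K) :
    ∃ (a : Fin 3 → K) (φ : K), ξ ⨯₃ a + φ • ξ = b := by
  have hξξ : ξ ⬝ᵥ ξ ≠ 0 := mt dotProduct_self_eq_zero.mp hξ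
  refine ⟨(ξ ⬝ᵥ ξ)⁻¹ • b ⨯₃ ξ, (ξ ⬝ᵥ ξ)⁻¹ * (b ⬝ᵥ ξ), ?_⟩
  rw [map_smul, cross_cross_eq_smul_sub_smul', ← smul_smul, ← smul_add, sub_add_cancel,
    smul_smul, inv_mul_cancel₀ hξξ, one_smul]

end OrderedField

theorem stmt1 (ξ : Fin 3 → ℝ) (hξ : ξ ≠ 0)
    (f1 : ℝ →ₗ[ℝ] (Fin 3 → ℝ) × ℝ)
    (f2 : ((Fin 3 → ℝ) × ℝ) →ₗ[ℝ] (Fin 3 → ℝ))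
    (hf1 : ∀ c : ℝ, f1 c = (c • ξ, 0))
    (hf2 : ∀ (a : Fin 3 → ℝ) (φ : ℝ), f2 (a, φ) = crossProduct ξ a - φ • ξ) :
    Function.Injective f1 ∧ LinearMap.range f1 = LinearMap.ker f2 ∧
      Function.Surjective f2 := by
  refine ⟨fun c c' h => ?_, ?_, fun b => ?_⟩
  · rw [hf1, hf1, Prod.mk.injEq] at h
    exact smul_left_injective ℝ hξ h.1
  · ext ⟨a, φ⟩
    simp only [LinearMap.mem_range, LinearMap.mem_ker, hf1, hf2, sub_eq_zero,
      cross_eq_smul_self_iff hξ, Prod.mk.injEq]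
    constructor
    · rintro ⟨c, hc, rfl⟩
      exact ⟨rfl, c, hc⟩
    · rintro ⟨rfl, c, hc⟩
      exact ⟨c, hc, rfl⟩
  · obtain ⟨a, φ, rfl⟩ := exists_cross_add_smul_eq hξ b
    exact ⟨(a, -φ), by rw [hf2, neg_smul, sub_neg_eq_add]⟩
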